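/- Let m_P, m_Q ∈ ℝ^d and let Σ_P, Σ_Q be positive semidefinite symmetric d×d matrices. Then FPD(P, Q) := ‖m_P − m_Q‖² + Tr(Σ_P) + Tr(Σ_Q) − 2·Tr((Σ_P^{1/2} Σ_Q Σ_P^{1/2})^{1/2}) is nonnegative. -/

import Mathlib

section

open scoped ComplexOrder

/-- The positive semidefinite square root of a positive semidefinite matrix
(removed from Mathlib; restored with its December 2024 definition). -/
noncomputable def Matrix.PosSemidef.sqrt {n 𝕜 : Type*} [Fintype n] [RCLike 𝕜] [DecidableEq n]
    {A : Matrix n n 𝕜} (hA : A.PosSemidef) : Matrix n n 𝕜 :=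
  hA.1.eigenvectorUnitary.1 * Matrix.diagonal ((↑) ∘ Real.sqrt ∘ hA.1.eigenvalues) *
  (star hA.1.eigenvectorUnitary : Matrix n n 𝕜)

end

section

open scoped ComplexOrder

lemma Matrix.IsHermitian.star_mul_self_mul_eq_diagonal {n 𝕜 : Type*} [Fintype n] [RCLike 𝕜]
    [DecidableEq n] {A : Matrix n n 𝕜} (hA : A.IsHermitian) :
    (star hA.eigenvectorUnitary : Matrix n n 𝕜) * A * hA.eigenvectorUnitary.1 =
      Matrix.diagonal (RCLike.ofReal ∘ hA.eigenvalues) := by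
  have := hA.conjStarAlgAut_star_eigenvectorUnitary
  rw [Unitary.conjStarAlgAut_apply, Unitary.coe_star, star_star] at this
  exact this

lemma Matrix.PosSemidef.posSemidef_sqrt {n 𝕜 : Type*} [Fintype n] [RCLike 𝕜] [DecidableEq n]
    {A : Matrix n n 𝕜} (hA : A.PosSemidef) : hA.sqrt.PosSemidef := by
  have hD : (Matrix.diagonal ((↑) ∘ Real.sqrt ∘ hA.1.eigenvalues : n → 𝕜)).PosSemidef := by
    rw [Matrix.posSemidef_diagonal_iff]
    intro i
    simp [Real.sqrt_nonneg]
  unfold Matrix.PosSemidef.sqrt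
  rw [Matrix.star_eq_conjTranspose]
  exact hD.mul_mul_conjTranspose_same _

lemma Matrix.PosSemidef.sqrt_mul_self {n 𝕜 : Type*} [Fintype n] [RCLike 𝕜] [DecidableEq n]
    {A : Matrix n n 𝕜} (hA : A.PosSemidef) : hA.sqrt * hA.sqrt = A := by
  set U : Matrix n n 𝕜 := hA.1.eigenvectorUnitary.1 with hUdef
  set D := Matrix.diagonal ((↑) ∘ Real.sqrt ∘ hA.1.eigenvalues : n → 𝕜) with hDdef
  have hU : star U * U = 1 := Unitary.coe_star_mul_self _
  have h2 : D * D = Matrix.diagonal (RCLike.ofReal ∘ hA.1.eigenvalues) := by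
    rw [hDdef, Matrix.diagonal_mul_diagonal]
    congr 1
    funext i
    simp [← RCLike.ofReal_mul, Real.mul_self_sqrt (hA.eigenvalues_nonneg i)]
  have hs := hA.1.spectral_theorem
  rw [Unitary.conjStarAlgAut_apply] at hs
  show U * D * star U * (U * D * star U) = A
  have e : U * D * star U * (U * D * star U) = U * (D * ((star U * U) * D)) * star U := by
    simp only [Matrix.mul_assoc]
  rw [e, hU, Matrix.one_mul, h2]
  exact hs.symm

end

open Matrix Finset

lemma my_trace_nonneg {d : ℕ} {M : Matrix (Fin d) (Fin d) ℝ} (hM : M.PosSemidef) :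
    0 ≤ M.trace := by
  rw [Matrix.trace]
  refine Finset.sum_nonneg fun i _ => ?_
  have := hM.dotProduct_mulVec_nonneg (Pi.single i 1)
  simpa [Matrix.diag, Matrix.mulVec_single, dotProduct, Pi.single_apply] using this

lemma my_vecMulVec_mul_vecMulVec {d : ℕ} (a b c e : Fin d → ℝ) :
    Matrix.vecMulVec a b * Matrix.vecMulVec c e = (b ⬝ᵥ c) • Matrix.vecMulVec a e := by
  ext i j
  simp only [Matrix.mul_apply, Matrix.vecMulVec_apply, Matrix.smul_apply, smul_eq_mul,
    dotProduct, Finset.sum_mul]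
  exact Finset.sum_congr rfl fun k _ => by ring

lemma my_dot_ineq {d : ℕ} (x y : Fin d → ℝ) : 2 * (x ⬝ᵥ y) ≤ x ⬝ᵥ x + y ⬝ᵥ y := by
  have h : 0 ≤ (x - y) ⬝ᵥ (x - y) :=
    Finset.sum_nonneg fun i _ => mul_self_nonneg _
  have e : (x - y) ⬝ᵥ (x - y) = x ⬝ᵥ x - 2 * (x ⬝ᵥ y) + y ⬝ᵥ y := by
    simp only [sub_dotProduct, dotProduct_sub, dotProduct_comm y x]
    ring
  linarith [e ▸ h]


lemma my_symm_dot {d : ℕ} {M : Matrix (Fin d) (Fin d) ℝ} (hM : M.IsHermitian)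
    (x y : Fin d → ℝ) : (M *ᵥ x) ⬝ᵥ y = x ⬝ᵥ (M *ᵥ y) := by
  rw [Matrix.dotProduct_mulVec, ← Matrix.mulVec_transpose]
  have : Mᵀ = M := by
    ext i j
    have h := congrFun (congrFun hM i) j
    simpa [Matrix.conjTranspose_apply] using h
  rw [this, dotProduct_comm]

lemma my_col_dot {d : ℕ} (M U : Matrix (Fin d) (Fin d) ℝ) (i : Fin d) :
    (fun k => U k i) ⬝ᵥ (M *ᵥ (fun k => U k i)) = (star U * M * U) i i := by
  simp only [Matrix.mul_apply, dotProduct, Matrix.mulVec, Matrix.star_apply,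
    star_trivial, Finset.sum_mul, Finset.mul_sum]
  rw [Finset.sum_comm]
  exact Finset.sum_congr rfl fun k _ => Finset.sum_congr rfl fun l _ => by ring

lemma my_trace_mul_vecMulVec {d : ℕ} (M : Matrix (Fin d) (Fin d) ℝ) (a : Fin d → ℝ) :
    (M * Matrix.vecMulVec a a).trace = a ⬝ᵥ (M *ᵥ a) := by
  simp only [Matrix.trace, Matrix.diag, Matrix.mul_apply, Matrix.vecMulVec_apply,
    dotProduct, Matrix.mulVec, Finset.mul_sum]
  exact Finset.sum_congr rfl fun k _ => Finset.sum_congr rfl fun l _ => by ring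

lemma key_ineq {d : ℕ}
    (SigP SigQ : Matrix (Fin d) (Fin d) ℝ)
    (hP : SigP.PosSemidef) (hQ : SigQ.PosSemidef)
    (hmid : (hP.sqrt * SigQ * hP.sqrt).PosSemidef) :
    2 * hmid.sqrt.trace ≤ SigP.trace + SigQ.trace := by
  classical
  set A := hP.sqrt with hAdef
  set B := hQ.sqrt with hBdef
  set S := hmid.sqrt with hSdef
  have hA : A.PosSemidef := hP.posSemidef_sqrt
  have hB : B.PosSemidef := hQ.posSemidef_sqrt
  have hS : S.PosSemidef := hmid.posSemidef_sqrt
  have hAA : A * A = SigP := hP.sqrt_mul_self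
  have hBB : B * B = SigQ := hQ.sqrt_mul_self
  have hSS : S * S = A * SigQ * A := hmid.sqrt_mul_self
  have hH : S.IsHermitian := hS.1
  set U : Matrix (Fin d) (Fin d) ℝ := (hH.eigenvectorUnitary : Matrix (Fin d) (Fin d) ℝ) with hUdef
  set lam : Fin d → ℝ := hH.eigenvalues with hlamdef
  have hlam_nonneg : ∀ i, 0 ≤ lam i := fun i => hS.eigenvalues_nonneg i
  obtain ⟨hU1, hU2⟩ : star U * U = 1 ∧ U * star U = 1 :=
    Unitary.mem_iff.mp (hH.eigenvectorUnitary).2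
  have hspec : star U * S * U = Matrix.diagonal lam := by
    have := hH.star_mul_self_mul_eq_diagonal
    simpa using this
  -- trace of S
  have htrS : S.trace = ∑ i, lam i := by
    have : (star U * S * U).trace = S.trace := by
      rw [Matrix.trace_mul_cycle, hU2, Matrix.one_mul]
    rw [← this, hspec, Matrix.trace_diagonal]
  -- the matrix N and its Gram identity
  set N : Matrix (Fin d) (Fin d) ℝ := B * A * U with hNdef
  have hAh : Aᴴ = A := hA.1
  have hBh : Bᴴ = B := hB.1
  have hNc : Nᴴ = star U * (A * B) := by
    rw [hNdef]
    simp only [Matrix.conjTranspose_mul, hAh, hBh, Matrix.star_eq_conjTranspose,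
      Matrix.mul_assoc]
  have hNN : Nᴴ * N = Matrix.diagonal (fun i => lam i * lam i) := by
    have h1 : Nᴴ * N = star U * (S * S) * U := by
      rw [hNc, hNdef, hSS, ← hBB]
      simp only [Matrix.mul_assoc]
    have h2 : (star U * S * U) * (star U * S * U) = star U * (S * S) * U := by
      simp only [Matrix.mul_assoc]
      rw [show U * (star U * (S * U)) = S * U by rw [← Matrix.mul_assoc, hU2, Matrix.one_mul]]
    rw [h1, ← h2, hspec, Matrix.diagonal_mul_diagonal]
  -- columns
  set v : Fin d → (Fin d → ℝ) := fun i k => U k i with hvdef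
  set c : Fin d → (Fin d → ℝ) := fun i k => N k i with hcdef
  have hcv : ∀ i, c i = B *ᵥ (A *ᵥ v i) := by
    intro i
    funext k
    rw [Matrix.mulVec_mulVec]
    simp only [hcdef, hNdef, Matrix.mulVec, dotProduct, Matrix.mul_apply, hvdef]
  have hc : ∀ i j, c i ⬝ᵥ c j = if i = j then lam i * lam i else 0 := by
    intro i j
    have h := congrFun (congrFun hNN i) j
    simp only [Matrix.mul_apply, Matrix.conjTranspose_apply, star_trivial,
      Matrix.diagonal_apply] at h
    simpa [dotProduct, hcdef] using h
  set f : Fin d → (Fin d → ℝ) := fun i => if lam i = 0 then 0 else (lam i)⁻¹ • c i with hfdef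
  have hff : ∀ i j, f i ⬝ᵥ f j = if i = j ∧ lam i ≠ 0 then 1 else 0 := by
    intro i j
    by_cases hij : i = j
    · subst hij
      by_cases hi : lam i = 0
      · simp [hfdef, hi]
      · have h1 : f i ⬝ᵥ f i = (lam i)⁻¹ * ((lam i)⁻¹ * (c i ⬝ᵥ c i)) := by
          simp [hfdef, if_neg hi, smul_dotProduct, dotProduct_smul, mul_assoc]
        rw [h1, hc i i, if_pos rfl, if_pos (show i = i ∧ lam i ≠ 0 from ⟨rfl, hi⟩)]
        field_simp
    · have h2 : f i ⬝ᵥ f j = 0 := by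
        by_cases hi : lam i = 0
        · simp [hfdef, hi]
        · by_cases hj : lam j = 0
          · simp [hfdef, hj]
          · simp only [hfdef, if_neg hi, if_neg hj, smul_dotProduct,
              dotProduct_smul, smul_eq_mul, hc i j, if_neg hij, mul_zero]
      rw [h2, if_neg (fun h => hij h.1)]
  -- the per-index inequality
  have hmain : ∀ i, 2 * lam i ≤ f i ⬝ᵥ (SigQ *ᵥ f i) + v i ⬝ᵥ (SigP *ᵥ v i) := by
    intro i
    by_cases hi : lam i = 0
    · have h1 : f i = 0 := by simp [hfdef, hi]
      have h2 : 0 ≤ v i ⬝ᵥ (SigP *ᵥ v i) := by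
        have := hP.dotProduct_mulVec_nonneg (v i)
        simpa using this
      simp [h1, hi]
      linarith
    · set x : Fin d → ℝ := B *ᵥ f i with hxdef
      set y : Fin d → ℝ := A *ᵥ v i with hydef
      have hxy : x ⬝ᵥ y = lam i := by
        rw [hxdef, hydef, my_symm_dot hB.1, ← hcv i]
        rw [hfdef]
        simp only [if_neg hi, smul_dotProduct, smul_eq_mul, hc i i, if_pos rfl, if_true]
        field_simp
      have hxx : x ⬝ᵥ x = f i ⬝ᵥ (SigQ *ᵥ f i) := by
        rw [hxdef, my_symm_dot hB.1, Matrix.mulVec_mulVec, hBB]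
      have hyy : y ⬝ᵥ y = v i ⬝ᵥ (SigP *ᵥ v i) := by
        rw [hydef, my_symm_dot hA.1, Matrix.mulVec_mulVec, hAA]
      have := my_dot_ineq x y
      rw [hxy, hxx, hyy] at this
      linarith
  -- sum over the P side
  have hsumP : ∑ i, v i ⬝ᵥ (SigP *ᵥ v i) = SigP.trace := by
    have h1 : ∀ i, v i ⬝ᵥ (SigP *ᵥ v i) = (star U * SigP * U) i i := fun i =>
      my_col_dot SigP U i
    calc ∑ i, v i ⬝ᵥ (SigP *ᵥ v i) = ∑ i, (star U * SigP * U) i i := by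
          exact Finset.sum_congr rfl fun i _ => h1 i
      _ = (star U * SigP * U).trace := rfl
      _ = SigP.trace := by rw [Matrix.trace_mul_cycle, hU2, Matrix.one_mul]
  -- sum over the Q side
  set Pi : Matrix (Fin d) (Fin d) ℝ := ∑ i, Matrix.vecMulVec (f i) (f i) with hPidef
  have hPih : Piᴴ = Pi := by
    rw [hPidef, Matrix.conjTranspose_sum]
    refine Finset.sum_congr rfl fun i _ => ?_
    ext k l
    simp [Matrix.conjTranspose_apply, Matrix.vecMulVec_apply, mul_comm]
  have hPi2 : Pi * Pi = Pi := by
    rw [hPidef, Finset.sum_mul_sum]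
    have : ∀ i j, Matrix.vecMulVec (f i) (f i) * Matrix.vecMulVec (f j) (f j)
        = (f i ⬝ᵥ f j) • Matrix.vecMulVec (f i) (f j) := fun i j =>
      my_vecMulVec_mul_vecMulVec _ _ _ _
    calc (∑ i, ∑ j, Matrix.vecMulVec (f i) (f i) * Matrix.vecMulVec (f j) (f j))
        = ∑ i, ∑ j, (f i ⬝ᵥ f j) • Matrix.vecMulVec (f i) (f j) := by
          exact Finset.sum_congr rfl fun i _ => Finset.sum_congr rfl fun j _ => this i j
      _ = ∑ i, Matrix.vecMulVec (f i) (f i) := by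
          refine Finset.sum_congr rfl fun i _ => ?_
          by_cases hi : lam i = 0
          · have h0 : f i = 0 := by simp [hfdef, hi]
            rw [h0]
            have hz : Matrix.vecMulVec (0 : Fin d → ℝ) (0 : Fin d → ℝ) = (0 : Matrix (Fin d) (Fin d) ℝ) := by
              ext k l; simp [Matrix.vecMulVec_apply]
            simp [hz]
          · rw [Finset.sum_eq_single i]
            · rw [hff i i, if_pos ⟨rfl, hi⟩, one_smul]
            · intro j _ hj
              rw [hff i j, if_neg (fun h => hj h.1.symm), zero_smul]
            · intro h
              exact absurd (Finset.mem_univ i) h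
  have htrQPi : ∑ i, f i ⬝ᵥ (SigQ *ᵥ f i) = (SigQ * Pi).trace := by
    rw [hPidef, Finset.mul_sum, Matrix.trace_sum]
    exact Finset.sum_congr rfl fun i _ => (my_trace_mul_vecMulVec SigQ (f i)).symm
  have hsumQ : (SigQ * Pi).trace ≤ SigQ.trace := by
    set R : Matrix (Fin d) (Fin d) ℝ := 1 - Pi with hRdef
    have hRh : Rᴴ = R := by rw [hRdef, Matrix.conjTranspose_sub, Matrix.conjTranspose_one, hPih]
    have hRR : R * R = R := by
      rw [hRdef]
      simp only [Matrix.sub_mul, Matrix.mul_sub, Matrix.one_mul, Matrix.mul_one, hPi2]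
      abel
    have hpsd : (R * SigQ * Rᴴ).PosSemidef := hQ.mul_mul_conjTranspose_same R
    have h0 : 0 ≤ (R * SigQ * Rᴴ).trace := my_trace_nonneg hpsd
    have he : (R * SigQ * Rᴴ).trace = SigQ.trace - (SigQ * Pi).trace := by
      rw [hRh, Matrix.trace_mul_cycle, hRR]
      rw [hRdef, Matrix.sub_mul, Matrix.one_mul, Matrix.trace_sub, Matrix.trace_mul_comm]
    linarith [he ▸ h0]
  -- put it together
  have hfinal : 2 * (∑ i, lam i) ≤ SigP.trace + SigQ.trace := by
    have h1 : ∑ i, 2 * lam i ≤ ∑ i, (f i ⬝ᵥ (SigQ *ᵥ f i) + v i ⬝ᵥ (SigP *ᵥ v i)) :=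
      Finset.sum_le_sum fun i _ => hmain i
    rw [Finset.sum_add_distrib, hsumP, htrQPi] at h1
    rw [Finset.mul_sum]
    linarith
  rw [htrS]
  exact hfinal

/-- Nonnegativity of the Fréchet point cloud distance
`FPD = ‖mP − mQ‖² + Tr SigP + Tr SigQ − 2·Tr((SigP^{1/2} SigQ SigP^{1/2})^{1/2})`. -/
theorem fpd_nonneg {d : ℕ}
    (mP mQ : EuclideanSpace ℝ (Fin d))
    (SigP SigQ : Matrix (Fin d) (Fin d) ℝ)
    (hP : SigP.PosSemidef) (hQ : SigQ.PosSemidef)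
    (hmid : (hP.sqrt * SigQ * hP.sqrt).PosSemidef) :
    0 ≤ ‖mP - mQ‖ ^ 2 + SigP.trace + SigQ.trace - 2 * hmid.sqrt.trace := by
  have h1 := key_ineq SigP SigQ hP hQ hmid
  have h2 : (0:ℝ) ≤ ‖mP - mQ‖ ^ 2 := sq_nonneg _
  linarith
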